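/- (Pooling limits of the Bayes risk.) Suppose τ ≠ 1. If ζ·(1 − τ) > 0, then r(d) tends to π0·C00 + π1·C11 + π0·(C10 − C00) as d → 0⁺ (the risk of the receiver always declaring H1). If ζ·(1 − τ) < 0, then r(d) tends to π0·C00 + π1·C11 + π1·(C01 − C11) as d → 0⁺ (the risk of the receiver always declaring H0). -/

import Mathlib

/-!
As `d → 0⁺` the two arguments of `Q` are `±ζ ln τ / d + O(d)`. Since `ln τ` and `1 − τ` have
opposite signs, the sign of `ζ (1 − τ)` decides which argument tends to `+∞` (so `Q → 0`) and
which to `−∞` (so `Q → 1`).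
-/

open Filter

/-- The Gaussian Q-function `Q(x) = (1/√(2π)) ∫_x^∞ exp(−t²/2) dt`. -/
noncomputable def gaussQ (x : ℝ) : ℝ :=
  (Real.sqrt (2 * Real.pi))⁻¹ * ∫ t in Set.Ioi x, Real.exp (-(t ^ 2 / 2))

open MeasureTheory Real Set Topology

lemma integrable_exp_neg_sq_div_two : Integrable fun t : ℝ => exp (-(t ^ 2 / 2)) := by
  convert integrable_exp_neg_mul_sq (show (0 : ℝ) < 1 / 2 by norm_num) using 3
  ring

lemma integral_exp_neg_sq_div_two : ∫ t : ℝ, exp (-(t ^ 2 / 2)) = √(2 * π) := by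
  convert integral_gaussian (1 / 2) using 4 <;> ring

lemma tendsto_gaussQ_atTop : Tendsto gaussQ atTop (𝓝 0) := by
  have h := (tendsto_integral_Ioi_zero (μ := volume) (f := fun t : ℝ => exp (-(t ^ 2 / 2)))
    tendsto_id).const_mul (√(2 * π))⁻¹
  rwa [mul_zero] at h

lemma tendsto_gaussQ_atBot : Tendsto gaussQ atBot (𝓝 1) := by
  have htail :
      Tendsto (fun x : ℝ => ∫ t in Ioi x, exp (-(t ^ 2 / 2))) atBot (𝓝 (√(2 * π))) := by
    rw [← integral_exp_neg_sq_div_two]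
    exact (aecover_Ioi tendsto_id).integral_tendsto_of_countably_generated
      integrable_exp_neg_sq_div_two
  have hsqrt : √(2 * π) ≠ 0 := (sqrt_pos.2 (by positivity)).ne'
  have h := htail.const_mul (√(2 * π))⁻¹
  rwa [inv_mul_cancel₀ hsqrt] at h

lemma tendsto_div_add_mul_nhdsGT_zero_atTop {c : ℝ} (hc : 0 < c) (b : ℝ) :
    Tendsto (fun d : ℝ => c / d + b * d) (𝓝[>] 0) atTop := by
  have hlin : Tendsto (fun d : ℝ => b * d) (𝓝[>] 0) (𝓝 0) := by
    simpa using ((continuous_const_mul b).tendsto 0).mono_left nhdsWithin_le_nhds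
  simpa only [div_eq_mul_inv] using
    (tendsto_inv_nhdsGT_zero.const_mul_atTop hc).atTop_add hlin

lemma tendsto_div_add_mul_nhdsGT_zero_atBot {c : ℝ} (hc : c < 0) (b : ℝ) :
    Tendsto (fun d : ℝ => c / d + b * d) (𝓝[>] 0) atBot := by
  have h := tendsto_div_add_mul_nhdsGT_zero_atTop (neg_pos.2 hc) (-b)
  rw [← tendsto_neg_atTop_iff]
  exact h.congr fun d => by ring

lemma tendsto_gaussQ_div_add_mul_of_pos {c : ℝ} (hc : 0 < c) (b : ℝ) :
    Tendsto (fun d : ℝ => gaussQ (c / d + b * d)) (𝓝[>] 0) (𝓝 0) :=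
  tendsto_gaussQ_atTop.comp (tendsto_div_add_mul_nhdsGT_zero_atTop hc b)

lemma tendsto_gaussQ_div_add_mul_of_neg {c : ℝ} (hc : c < 0) (b : ℝ) :
    Tendsto (fun d : ℝ => gaussQ (c / d + b * d)) (𝓝[>] 0) (𝓝 1) :=
  tendsto_gaussQ_atBot.comp (tendsto_div_add_mul_nhdsGT_zero_atBot hc b)

lemma mul_log_neg_of_mul_one_sub_pos {ζ τ : ℝ} (hτ : 0 < τ) (h : 0 < ζ * (1 - τ)) :
    ζ * log τ < 0 := by
  rcases pos_and_pos_or_neg_and_neg_of_mul_pos h with ⟨hζ, hτ1⟩ | ⟨hζ, hτ1⟩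
  · exact mul_neg_of_pos_of_neg hζ (log_neg hτ (by linarith))
  · exact mul_neg_of_neg_of_pos hζ (log_pos (by linarith))

lemma tendsto_const_add_mul_add_mul {l : Filter ℝ} {f g : ℝ → ℝ} {p q : ℝ} (a b c : ℝ)
    (hf : Tendsto f l (𝓝 p)) (hg : Tendsto g l (𝓝 q)) :
    Tendsto (fun d => a + b * f d + c * g d) l (𝓝 (a + b * p + c * q)) :=
  (tendsto_const_nhds.add (hf.const_mul b)).add (hg.const_mul c)

theorem stmt_11_general (π0 π1 C00 C01 C10 C11 τ ζ : ℝ)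
    (hτ : 0 < τ)
    (r : ℝ → ℝ)
    (hr : r = fun d : ℝ => π0 * C00 + π1 * C11
        + π0 * (C10 - C00) * gaussQ (ζ * (Real.log τ / d + d / 2))
        + π1 * (C01 - C11) * gaussQ (ζ * (-Real.log τ / d + d / 2))) :
    (0 < ζ * (1 - τ) →
      Tendsto r (nhdsWithin 0 (Set.Ioi (0 : ℝ)))
        (nhds (π0 * C00 + π1 * C11 + π0 * (C10 - C00)))) ∧
    (ζ * (1 - τ) < 0 →
      Tendsto r (nhdsWithin 0 (Set.Ioi (0 : ℝ)))
        (nhds (π0 * C00 + π1 * C11 + π1 * (C01 - C11)))) := by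
  have harg₁ (d : ℝ) : ζ * (log τ / d + d / 2) = ζ * log τ / d + ζ / 2 * d := by ring
  have harg₂ (d : ℝ) : ζ * (-log τ / d + d / 2) = -(ζ * log τ) / d + ζ / 2 * d := by ring
  simp only [hr, harg₁, harg₂]
  refine ⟨fun h => ?_, fun h => ?_⟩
  · have hL : ζ * log τ < 0 := mul_log_neg_of_mul_one_sub_pos hτ h
    convert tendsto_const_add_mul_add_mul _ _ _ (tendsto_gaussQ_div_add_mul_of_neg hL _)
      (tendsto_gaussQ_div_add_mul_of_pos (neg_pos.2 hL) _) using 2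
    ring
  · have hL : 0 < ζ * log τ := by
      have := mul_log_neg_of_mul_one_sub_pos (ζ := -ζ) hτ (by linarith [neg_mul ζ (1 - τ)])
      linarith [neg_mul ζ (log τ)]
    convert tendsto_const_add_mul_add_mul _ _ _ (tendsto_gaussQ_div_add_mul_of_pos hL _)
      (tendsto_gaussQ_div_add_mul_of_neg (neg_neg_of_pos hL) _) using 2
    ring

/-- Pooling limits of the transmitter Bayes risk as `d → 0⁺`. -/
theorem stmt_11 (π0 π1 C00 C01 C10 C11 τ ζ : ℝ)
    (hπ0 : 0 < π0) (hπ1 : 0 < π1) (hτ : 0 < τ) (hζ : ζ = 1 ∨ ζ = -1)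
    (hτ1 : τ ≠ 1)
    (r : ℝ → ℝ)
    (hr : r = fun d : ℝ => π0 * C00 + π1 * C11
        + π0 * (C10 - C00) * gaussQ (ζ * (Real.log τ / d + d / 2))
        + π1 * (C01 - C11) * gaussQ (ζ * (-Real.log τ / d + d / 2))) :
    (0 < ζ * (1 - τ) →
      Tendsto r (nhdsWithin 0 (Set.Ioi (0 : ℝ)))
        (nhds (π0 * C00 + π1 * C11 + π0 * (C10 - C00)))) ∧
    (ζ * (1 - τ) < 0 →
      Tendsto r (nhdsWithin 0 (Set.Ioi (0 : ℝ)))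
        (nhds (π0 * C00 + π1 * C11 + π1 * (C01 - C11)))) :=
  stmt_11_general π0 π1 C00 C01 C10 C11 τ ζ hτ r hr
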